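/- Let M be an LTL-model, [n_1,...,n_k] a nonempty observation sequence, and A^l an LTL^l-formula (an LTL∇-formula in which the history operator ∇ occurs only inside the scope of a G or an X). Then M, [n_1,...,n_k] ⊨∇ A^l if and only if M, [m_1,...,m_r, n_k] ⊨∇ A^l for every finite sequence m_1,...,m_r of natural numbers; that is, the truth of A^l depends only on the last element of the observation sequence. -/

import Mathlib

/-! ## LTL∇-formulas: `A ::= p | ⊥ | A ⊃ A | G A | X A | ∇ A` -/
inductive NablaFormula (P : Type) : Type
  | atom  : P → NablaFormula P
  | bot   : NablaFormula P
  | imp   : NablaFormula P → NablaFormula P → NablaFormula P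
  | G     : NablaFormula P → NablaFormula P
  | X     : NablaFormula P → NablaFormula P
  | nabla : NablaFormula P → NablaFormula P

namespace NablaFormula
variable {P : Type}
/-- `¬A ≡ A ⊃ ⊥` -/
def neg (A : NablaFormula P) : NablaFormula P := imp A bot
/-- `A ∨ B ≡ ¬A ⊃ B` -/
def or (A B : NablaFormula P) : NablaFormula P := imp (neg A) B
/-- `A ∧ B ≡ ¬(¬A ∨ ¬B)` -/
def and (A B : NablaFormula P) : NablaFormula P := neg (or (neg A) (neg B))
/-- `F A ≡ ¬G¬A` -/
def F (A : NablaFormula P) : NablaFormula P := neg (G (neg A))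
end NablaFormula

/-- Truth of an LTL∇-formula at an observation sequence, in the LTL-model given by
the valuation `V : ℕ → P → Prop` (the time structure is the standard structure of ℕ).
A nonempty observation sequence `[n_0, …, n_k]` is represented *in reverse* by its
last element `n = n_k` together with the reversed remainder `ρ = [n_{k-1}, …, n_0]`;
thus `NablaSat V A n ρ` means `M, [n_0, …, n_{k-1}, n] ⊨∇ A`. -/
def NablaSat {P : Type} (V : ℕ → P → Prop) : NablaFormula P → ℕ → List ℕ → Prop
  | .atom p, n, _ => V n p
  | .bot, _, _ => False
  | .imp A B, n, ρ => NablaSat V A n ρ → NablaSat V B n ρ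
  | .G A, n, ρ => ∀ m, n ≤ m → NablaSat V A m (n :: ρ)
  | .X A, n, ρ => NablaSat V A (n + 1) (n :: ρ)
  | .nabla A, n, [] => NablaSat V A n []
  | .nabla A, n, n' :: ρ => ∀ m, n' ≤ m → m ≤ n → NablaSat V A m (n' :: ρ)

/-! ## LTL-formulas: `A ::= p | ⊥ | A ⊃ A | G A | X A | A U B` -/
inductive LTLFormula (P : Type) : Type
  | atom : P → LTLFormula P
  | bot  : LTLFormula P
  | imp  : LTLFormula P → LTLFormula P → LTLFormula P
  | G    : LTLFormula P → LTLFormula P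
  | X    : LTLFormula P → LTLFormula P
  | U    : LTLFormula P → LTLFormula P → LTLFormula P

namespace LTLFormula
variable {P : Type}
def neg (A : LTLFormula P) : LTLFormula P := imp A bot
def or (A B : LTLFormula P) : LTLFormula P := imp (neg A) B
def and (A B : LTLFormula P) : LTLFormula P := neg (or (neg A) (neg B))
def F (A : LTLFormula P) : LTLFormula P := neg (G (neg A))
def iff (A B : LTLFormula P) : LTLFormula P := and (imp A B) (imp B A)
end LTLFormula

/-- Standard LTL truth at a time instant `n` in the model with valuation `V`. -/
def LTLSat {P : Type} (V : ℕ → P → Prop) : LTLFormula P → ℕ → Prop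
  | .atom p, n => V n p
  | .bot, _ => False
  | .imp A B, n => LTLSat V A n → LTLSat V B n
  | .G A, n => ∀ m, n ≤ m → LTLSat V A m
  | .X A, n => LTLSat V A (n + 1)
  | .U A B, n => ∃ n', n ≤ n' ∧ LTLSat V B n' ∧ ∀ m, n ≤ m → m < n' → LTLSat V A m

/-- The translation `(·)*` from LTL into LTL∇:
`(A U B)* = B* ∨ (F (X B* ∧ ∇ A*))`. -/
def trNabla {P : Type} : LTLFormula P → NablaFormula P
  | .atom p => .atom p
  | .bot => .bot
  | .imp A B => .imp (trNabla A) (trNabla B)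
  | .G A => .G (trNabla A)
  | .X A => .X (trNabla A)
  | .U A B => NablaFormula.or (trNabla B)
      (NablaFormula.F (NablaFormula.and (.X (trNabla B)) (.nabla (trNabla A))))

/-! ## LTL^l- and LTL^{l∇}-formulas (mutual grammar) -/
mutual
  /-- LTL^l-formulas: `A^l ::= p | ⊥ | A^l ⊃ A^l | G A^∇ | X A^∇`. -/
  inductive IsLocal {P : Type} : NablaFormula P → Prop
    | atom (p : P) : IsLocal (.atom p)
    | bot : IsLocal .bot
    | imp {A B : NablaFormula P} : IsLocal A → IsLocal B → IsLocal (.imp A B)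
    | G {A : NablaFormula P} : IsHist A → IsLocal (.G A)
    | X {A : NablaFormula P} : IsHist A → IsLocal (.X A)
  /-- LTL^{l∇}-formulas: `A^∇ ::= A^l | A^∇ ⊃ A^∇ | ∇ A^∇`. -/
  inductive IsHist {P : Type} : NablaFormula P → Prop
    | ofLocal {A : NablaFormula P} : IsLocal A → IsHist A
    | imp {A B : NablaFormula P} : IsHist A → IsHist B → IsHist (.imp A B)
    | nabla {A : NablaFormula P} : IsHist A → IsHist (.nabla A)
end

/-! ## The labeled natural deduction system N(LTL∇).
Labels are natural numbers (a denumerable set). A labeled formula `α : A` with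
`α = b_0 … b_{k-1} b` is represented in reverse, as the last label `b` together
with the reversed prefix `ρ = [b_{k-1}, …, b_0]`. -/

/-- Generic (labeled or relational) formulas. -/
inductive GenForm (P : Type) : Type
  | lab : ℕ → List ℕ → NablaFormula P → GenForm P  -- `lab b ρ A` is `(ρ.reverse)b : A`
  | le  : ℕ → ℕ → GenForm P                         -- `b ⩽ c`
  | lt  : ℕ → ℕ → GenForm P                         -- `b ◁ c` (immediate successor)

/-- The labels occurring in a generic formula. -/
def GenForm.labels {P : Type} : GenForm P → Set ℕ
  | .lab b ρ _ => insert b {x | x ∈ ρ}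
  | .le b c => {b, c}
  | .lt b c => {b, c}

/-- `x` does not occur in any formula of `Φ`. -/
def FreshIn {P : Type} (x : ℕ) (Φ : Set (GenForm P)) : Prop :=
  ∀ ψ ∈ Φ, x ∉ ψ.labels

/-- Substitution `φ[c/b]` of the label `c` for the label `b`: `φ.subst b c`. -/
def GenForm.subst {P : Type} : GenForm P → ℕ → ℕ → GenForm P
  | .lab d ρ A, b, c => .lab (if d = b then c else d) (ρ.map fun x => if x = b then c else x) A
  | .le d e, b, c => .le (if d = b then c else d) (if e = b then c else e)
  | .lt d e, b, c => .lt (if d = b then c else d) (if e = b then c else e)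

/-- Derivability in N(LTL∇): `Deriv Φ φ` means that there is a derivation of `φ`
whose open assumptions are all contained in `Φ`. -/
inductive Deriv {P : Type} : Set (GenForm P) → GenForm P → Prop
  | assume {Φ : Set (GenForm P)} {φ} : φ ∈ Φ → Deriv Φ φ
  | botE {Φ : Set (GenForm P)} {b₁ b₂ ρ₁ ρ₂ A} :
      Deriv (insert (.lab b₁ ρ₁ (A.imp .bot)) Φ) (.lab b₂ ρ₂ .bot) →
      Deriv Φ (.lab b₁ ρ₁ A)
  | impI {Φ : Set (GenForm P)} {b ρ A B} :
      Deriv (insert (.lab b ρ A) Φ) (.lab b ρ B) →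
      Deriv Φ (.lab b ρ (A.imp B))
  | impE {Φ : Set (GenForm P)} {b ρ A B} :
      Deriv Φ (.lab b ρ (A.imp B)) → Deriv Φ (.lab b ρ A) → Deriv Φ (.lab b ρ B)
  | GI {Φ : Set (GenForm P)} {b₁ b₂ ρ A} :
      Deriv (insert (.le b₁ b₂) Φ) (.lab b₂ (b₁ :: ρ) A) →
      b₂ ≠ b₁ → b₂ ∉ ρ → FreshIn b₂ Φ →
      Deriv Φ (.lab b₁ ρ (.G A))
  | GE {Φ : Set (GenForm P)} {b₁ b₂ ρ A} :
      Deriv Φ (.lab b₁ ρ (.G A)) → Deriv Φ (.le b₁ b₂) →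
      Deriv Φ (.lab b₂ (b₁ :: ρ) A)
  | XI {Φ : Set (GenForm P)} {b₁ b₂ ρ A} :
      Deriv (insert (.lt b₁ b₂) Φ) (.lab b₂ (b₁ :: ρ) A) →
      b₂ ≠ b₁ → b₂ ∉ ρ → FreshIn b₂ Φ →
      Deriv Φ (.lab b₁ ρ (.X A))
  | XE {Φ : Set (GenForm P)} {b₁ b₂ ρ A} :
      Deriv Φ (.lab b₁ ρ (.X A)) → Deriv Φ (.lt b₁ b₂) →
      Deriv Φ (.lab b₂ (b₁ :: ρ) A)
  | nablaI {Φ : Set (GenForm P)} {b₁ b₂ b₃ ρ A} :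
      Deriv (insert (.le b₁ b₂) (insert (.le b₂ b₃) Φ)) (.lab b₂ (b₁ :: ρ) A) →
      b₂ ≠ b₁ → b₂ ≠ b₃ → b₂ ∉ ρ → FreshIn b₂ Φ →
      Deriv Φ (.lab b₃ (b₁ :: ρ) (.nabla A))
  | nablaE {Φ : Set (GenForm P)} {b₁ b₂ b₃ ρ A} :
      Deriv Φ (.lab b₃ (b₁ :: ρ) (.nabla A)) →
      Deriv Φ (.le b₁ b₂) → Deriv Φ (.le b₂ b₃) →
      Deriv Φ (.lab b₂ (b₁ :: ρ) A)
  | last {Φ : Set (GenForm P)} {b ρ ρ' A} :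
      Deriv Φ (.lab b ρ' A) → IsLocal A →
      Deriv Φ (.lab b ρ A)
  | serLt {Φ : Set (GenForm P)} {b₁ b₂ b ρ A} :
      Deriv (insert (.lt b₁ b₂) Φ) (.lab b ρ A) →
      b₂ ≠ b₁ → b₂ ≠ b → b₂ ∉ ρ → FreshIn b₂ Φ →
      Deriv Φ (.lab b ρ A)
  | linLt {Φ : Set (GenForm P)} {b₁ b₂ b₃ φ b ρ A} :
      Deriv Φ (.lt b₁ b₂) → Deriv Φ (.lt b₁ b₃) → Deriv Φ φ →
      Deriv (insert (φ.subst b₂ b₃) Φ) (.lab b ρ A) →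
      Deriv Φ (.lab b ρ A)
  | reflLe {Φ : Set (GenForm P)} {b₁ b ρ A} :
      Deriv (insert (.le b₁ b₁) Φ) (.lab b ρ A) →
      Deriv Φ (.lab b ρ A)
  | transLe {Φ : Set (GenForm P)} {b₁ b₂ b₃ b ρ A} :
      Deriv Φ (.le b₁ b₂) → Deriv Φ (.le b₂ b₃) →
      Deriv (insert (.le b₁ b₃) Φ) (.lab b ρ A) →
      Deriv Φ (.lab b ρ A)
  | eqLe {Φ : Set (GenForm P)} {b₁ b₂ ρ A} :
      Deriv Φ (.le b₁ b₂) → Deriv Φ (.le b₂ b₁) →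
      Deriv Φ (.lab b₁ ρ A) →
      Deriv Φ (.lab b₂ ρ A)
  | splitLe {Φ : Set (GenForm P)} {b₁ b₂ b' φ b ρ A} :
      Deriv Φ (.le b₁ b₂) → Deriv Φ φ →
      Deriv (insert (φ.subst b₁ b₂) Φ) (.lab b ρ A) →
      Deriv (insert (.lt b₁ b') (insert (.le b' b₂) Φ)) (.lab b ρ A) →
      b' ≠ b₁ → b' ≠ b₂ → b' ≠ b → b' ∉ ρ → FreshIn b' Φ →
      Deriv Φ (.lab b ρ A)
  | baseLe {Φ : Set (GenForm P)} {b₁ b₂ b ρ A} :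
      Deriv Φ (.lt b₁ b₂) →
      Deriv (insert (.le b₁ b₂) Φ) (.lab b ρ A) →
      Deriv Φ (.lab b ρ A)
  | ind {Φ : Set (GenForm P)} {b₀ b bi bj ρ A} :
      Deriv Φ (.lab b₀ ρ A) → Deriv Φ (.le b₀ b) →
      Deriv (insert (.le b₀ bi) (insert (.lt bi bj) (insert (.lab bi ρ A) Φ)))
        (.lab bj ρ A) →
      bi ≠ bj → bi ≠ b → bi ≠ b₀ → bi ∉ ρ → FreshIn bi Φ →
      bj ≠ b → bj ≠ b₀ → bj ∉ ρ → FreshIn bj Φ →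
      Deriv Φ (.lab b ρ A)

/-- Satisfaction of generic formulas in a structure `⟨M, I⟩`, where `M` is given
by the valuation `V` and `I : L → ℕ` interprets labels. -/
def GSat {P : Type} (V : ℕ → P → Prop) (I : ℕ → ℕ) : GenForm P → Prop
  | .lab b ρ A => NablaSat V A (I b) (ρ.map I)
  | .le b c => I b ≤ I c
  | .lt b c => I c = I b + 1

/-! ## The Hilbert system H(LTL) -/

/-- Propositional evaluation of an LTL-formula with respect to a valuation `v` on
formulas, treating atoms and formulas with outermost `G`, `X`, `U` as propositional
atoms. `A` is an instance of a propositional tautology iff `propEval v A` for all `v`. -/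
def propEval {P : Type} (v : LTLFormula P → Prop) : LTLFormula P → Prop
  | .atom p => v (.atom p)
  | .bot => False
  | .imp A B => propEval v A → propEval v B
  | .G A => v (.G A)
  | .X A => v (.X A)
  | .U A B => v (.U A B)

/-- Theorems of the Hilbert axiomatization H(LTL). -/
inductive HLTL {P : Type} : LTLFormula P → Prop
  | taut {A : LTLFormula P} : (∀ v : LTLFormula P → Prop, propEval v A) → HLTL A
  | a2 {A B : LTLFormula P} : HLTL (.imp (.G (.imp A B)) (.imp (.G A) (.G B)))
  | a3 {A : LTLFormula P} : HLTL (LTLFormula.iff (.X A.neg) (LTLFormula.X A).neg)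
  | a4 {A B : LTLFormula P} : HLTL (.imp (.X (.imp A B)) (.imp (.X A) (.X B)))
  | a5 {A : LTLFormula P} : HLTL (.imp (.G A) (LTLFormula.and A (.X (.G A))))
  | a6 {A : LTLFormula P} : HLTL (.imp (.G (.imp A (.X A))) (.imp A (.G A)))
  | a7 {A B : LTLFormula P} :
      HLTL (LTLFormula.iff (.U A B) (LTLFormula.or B (LTLFormula.and A (.X (.U A B)))))
  | a8 {A B : LTLFormula P} : HLTL (.imp (.U A B) (LTLFormula.F B))
  | mp {A B : LTLFormula P} : HLTL (.imp A B) → HLTL A → HLTL B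
  | necX {A : LTLFormula P} : HLTL A → HLTL (.X A)
  | necG {A : LTLFormula P} : HLTL A → HLTL (.G A)

/-! A local formula reads only the current point, and a history formula only the current and the
previous point: `∇` looks back exactly one step, while `G` and `X` make the current point the
previous one for their argument. -/

section Locality

variable {P : Type} {V : ℕ → P → Prop}

mutual

theorem IsLocal.nablaSat_iff {A : NablaFormula P} (hA : IsLocal A) (n : ℕ) (ρ ρ' : List ℕ) :
    NablaSat V A n ρ ↔ NablaSat V A n ρ' :=
  match hA with
  | .atom _ | .bot => Iff.rfl
  | .imp hB hC => imp_congr (hB.nablaSat_iff n ρ ρ') (hC.nablaSat_iff n ρ ρ')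
  | .G hB => forall₂_congr fun m _ => hB.nablaSat_cons_iff m n ρ ρ'
  | .X hB => hB.nablaSat_cons_iff (n + 1) n ρ ρ'

theorem IsHist.nablaSat_cons_iff {A : NablaFormula P} (hA : IsHist A) (n n' : ℕ)
    (ρ ρ' : List ℕ) : NablaSat V A n (n' :: ρ) ↔ NablaSat V A n (n' :: ρ') :=
  match hA with
  | .ofLocal hB => hB.nablaSat_iff n _ _
  | .imp hB hC => imp_congr (hB.nablaSat_cons_iff n n' ρ ρ') (hC.nablaSat_cons_iff n n' ρ ρ')
  | .nabla hB => forall₃_congr fun m _ _ => hB.nablaSat_cons_iff m n' ρ ρ'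

end

end Locality

/-- Lemma: locality of LTL^l-formulas.
For an LTL^l-formula `A` (∇ only in the scope of G or X), `M, [n_1,…,n_k] ⊨∇ A`
iff `M, [m_1,…,m_r,n_k] ⊨∇ A` for every finite sequence `m_1,…,m_r`. Observation
sequences are represented by their last element `n` and reversed remainder `ρ`. -/
theorem local_truth_depends_only_on_last {P : Type} (V : ℕ → P → Prop)
    (A : NablaFormula P) (hA : IsLocal A) (n : ℕ) (ρ : List ℕ) :
    NablaSat V A n ρ ↔ ∀ ρ' : List ℕ, NablaSat V A n ρ' :=
  ⟨fun h ρ' => (hA.nablaSat_iff n ρ ρ').mp h, fun h => h ρ⟩
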